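/- arXiv:1701.07009 — 2 statements merged into one kernel-verified Lean document; each statement's English description precedes it below -/
import Mathlib

section
/- Every nonempty Dyck path Q strictly above the diagonal except at its endpoints admits a unique prime decomposition Q = n_0 Q_1 n_1 ⋯ n_k Q_k where each Q_i is a prime Dyck path (translated to start at its initial point), each n_i is a (possibly empty) sequence of north steps, and n_0 is nonempty. -/
/-!
Dyck paths are encoded as lists of booleans: `true` is a north step `(0,1)`,
`false` is an east step `(1,0)`.  A Dyck path of semilength `n` goes from
`(0,0)` to `(n,n)` staying weakly above the diagonal `y = x`.
-/

/-- `D` is a Dyck word: every prefix has at least as many north steps as east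
steps, and the total numbers agree. -/
def isDyck (D : List Bool) : Bool :=
  ((List.range (D.length + 1)).all fun k =>
    (D.take k).count false ≤ (D.take k).count true) &&
  (D.count true == D.count false)

/-- The (finite) set of Dyck paths of semilength `n`. -/
def dyckPaths (n : ℕ) : Finset (List Bool) :=
  ((List.replicate n true ++ List.replicate n false).permutations.filter isDyck).toFinset

/-- The number of returns: east steps ending on the diagonal `y = x`. -/
def returns (D : List Bool) : ℕ :=
  ((List.range D.length).filter fun i =>
    (D[i]? == some false) &&
    ((D.take (i + 1)).count true == (D.take (i + 1)).count false)).length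

/-- `ldr D`: the `y`-coordinate of the midpoint of the last double rise
(last pair of consecutive north steps), `0` if there is no double rise. -/
def ldr (D : List Bool) : ℕ :=
  match ((List.range D.length).filter fun i =>
      (D[i]? == some true) && (D[i+1]? == some true)).getLast? with
  | some i => (D.take (i + 1)).count true
  | none => 0

/-- The set of `x`-coordinates (plus 1) of the north steps of `D`. -/
def rises (D : List Bool) : Finset ℕ :=
  (((List.range D.length).filter fun i => D[i]? == some true).map
    fun i => (D.take i).count false + 1).toFinset

/-- The multiset of `x`-coordinates (plus 1) of the north steps of `D`. -/
def risesM (D : List Bool) : Multiset ℕ :=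
  ↑(((List.range D.length).filter fun i => D[i]? == some true).map
    fun i => (D.take i).count false + 1)

/-- `D` ends with a single east step: its last maximal run of east steps has
length one, i.e. `D` ends with a north step followed by one east step. -/
def EndsSingleEast (D : List Bool) : Prop :=
  ∃ P, D = P ++ [true, false]

/-- `R` contains only single rises: no two consecutive north steps. -/
def SingleRises (R : List Bool) : Prop :=
  ∀ i, ¬ (R[i]? = some true ∧ R[i+1]? = some true)

/-- A prime Dyck path: a Dyck path whose only return is its final east step. -/
def IsPrimeDyck (Q : List Bool) : Prop :=
  isDyck Q = true ∧ Q ≠ [] ∧ returns Q = 1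

/-- Concatenation `n₀ Q₁ n₁ Q₂ ⋯` of runs of north steps and paths, encoded as a
list of pairs `(nᵢ₋₁, Qᵢ)`. -/
def primeBlocks (l : List (ℕ × List Bool)) : List Bool :=
  (l.map fun p => List.replicate p.1 true ++ p.2).flatten

/-!
Write `height S` for the number of north minus east steps of `S`. Prime blocks are the
excursions returning to their starting height exactly at their end, and the north steps between
blocks are the ones never matched by a later east step.

Uniqueness is read off from the front: a longer leading run of north steps would keep the path
strictly above the height at which the other decomposition's first prime block returns, and two
prime blocks starting at the same point both end at its first return to that height. Existence:
if the path returns to its starting height, split off the first return as a prime block;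
otherwise its first step is an unmatched north step, and the rest is decomposed recursively.
-/

def height (S : List Bool) : ℤ := (S.count true : ℤ) - S.count false

@[simp] lemma height_nil : height [] = 0 := rfl

@[simp] lemma height_cons (b : Bool) (S : List Bool) :
    height (b :: S) = height S + if b then 1 else -1 := by
  cases b <;> simp [height] <;> ring

@[simp] lemma height_append (A B : List Bool) : height (A ++ B) = height A + height B := by
  simp only [height, List.count_append]; push_cast; ring

@[simp] lemma height_replicate_true (n : ℕ) : height (List.replicate n true) = n := by
  simp [height, List.count_replicate]

lemma height_take_succ (S : List Bool) {i : ℕ} (hi : i < S.length) :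
    height (S.take (i + 1)) = height (S.take i) + if S[i] then 1 else -1 := by
  rw [List.take_add_one, List.getElem?_eq_getElem hi]
  cases S[i] <;> simp

def StaysAbove (S : List Bool) : Prop := ∀ i, 0 ≤ height (S.take i)

lemma StaysAbove.height_nonneg {S : List Bool} (h : StaysAbove S) : 0 ≤ height S := by
  simpa using h S.length

lemma StaysAbove.append {A B : List Bool} (hA : StaysAbove A) (hB : StaysAbove B) :
    StaysAbove (A ++ B) := by
  intro i
  rw [List.take_append, height_append]
  rcases le_or_gt i A.length with h | h
  · simpa [Nat.sub_eq_zero_of_le h] using hA i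
  · rw [List.take_of_length_le h.le]
    linarith [hA.height_nonneg, hB (i - A.length)]

lemma staysAbove_replicate_true (n : ℕ) : StaysAbove (List.replicate n true) := by
  intro i
  simp [List.take_replicate]

lemma StaysAbove.getElem?_eq_false {S : List Bool} (h : StaysAbove S) {i : ℕ}
    (hi : i < S.length) (h0 : height (S.take (i + 1)) = 0) : S[i]? = some false := by
  rw [List.getElem?_eq_getElem hi]
  have := h i
  rw [height_take_succ S hi] at h0
  cases hb : S[i] <;> simp_all; omega

lemma isDyck_iff {Q : List Bool} : isDyck Q = true ↔ StaysAbove Q ∧ height Q = 0 := by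
  have hcount : ∀ A : List Bool, A.count false ≤ A.count true ↔ 0 ≤ height A := by
    intro A; simp only [height]; omega
  simp only [isDyck, Bool.and_eq_true, List.all_eq_true, List.mem_range, decide_eq_true_eq,
    beq_iff_eq, hcount, StaysAbove, height]
  constructor
  · rintro ⟨h1, h2⟩
    refine ⟨fun i => ?_, by omega⟩
    rcases le_or_gt i Q.length with h | h
    · exact h1 i (by omega)
    · simpa [List.take_of_length_le h.le] using h1 Q.length (by omega)
  · rintro ⟨h1, h2⟩
    exact ⟨fun i _ => h1 i, by omega⟩

lemma returns_eq_card {Q : List Bool} (h : StaysAbove Q) :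
    returns Q = ((Finset.range Q.length).filter fun i => height (Q.take (i + 1)) = 0).card := by
  rw [returns, Finset.card_def, Finset.filter_val, Finset.range_val, Multiset.range,
    Multiset.filter_coe, Multiset.coe_card]
  congr 1
  apply List.filter_congr
  intro i hi
  rw [List.mem_range] at hi
  have hcount : ∀ A : List Bool, A.count true = A.count false ↔ height A = 0 := by
    intro A; simp only [height]; omega
  rw [Bool.eq_iff_iff]
  simp only [Bool.and_eq_true, beq_iff_eq, hcount, decide_eq_true_eq]
  exact ⟨fun h' => h'.2, fun h0 => ⟨h.getElem?_eq_false hi h0, h0⟩⟩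

lemma returns_eq_one_iff {Q : List Bool} (h : StaysAbove Q) (hQ : height Q = 0) (hne : Q ≠ []) :
    returns Q = 1 ↔ ∀ i, 0 < i → i < Q.length → height (Q.take i) ≠ 0 := by
  rw [returns_eq_card h, Finset.card_eq_one]
  set s := (Finset.range Q.length).filter fun i => height (Q.take (i + 1)) = 0 with hs
  have mem_iff : ∀ j, j ∈ s ↔ j < Q.length ∧ height (Q.take (j + 1)) = 0 := by
    simp [hs]
  have hlen : 0 < Q.length := List.length_pos_iff.mpr hne
  have hlast : Q.length - 1 ∈ s := by
    rw [mem_iff, Nat.sub_add_cancel hlen, List.take_length]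
    exact ⟨by omega, hQ⟩
  constructor
  · rintro ⟨a, ha⟩ i hi0 hi h0
    have hi' : i - 1 ∈ s := by
      rw [mem_iff, Nat.sub_add_cancel hi0]
      exact ⟨by omega, h0⟩
    rw [ha, Finset.mem_singleton] at hlast hi'
    omega
  · intro hpos
    refine ⟨Q.length - 1, Finset.eq_singleton_iff_unique_mem.mpr ⟨hlast, fun j hj => ?_⟩⟩
    rw [mem_iff] at hj
    by_contra hne
    exact hpos (j + 1) (by omega) (by omega) hj.2

lemma isPrimeDyck_iff {Q : List Bool} : IsPrimeDyck Q ↔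
    Q ≠ [] ∧ height Q = 0 ∧ ∀ i, 0 < i → i < Q.length → 0 < height (Q.take i) := by
  constructor
  · rintro ⟨hdyck, hne, hret⟩
    obtain ⟨habove, hQ⟩ := isDyck_iff.mp hdyck
    have hret := (returns_eq_one_iff habove hQ hne).mp hret
    exact ⟨hne, hQ, fun i hi0 hi => lt_of_le_of_ne (habove i) (hret i hi0 hi).symm⟩
  · rintro ⟨hne, hQ, hpos⟩
    have habove : StaysAbove Q := by
      intro i
      rcases Nat.eq_zero_or_pos i with rfl | hi0
      · simp
      rcases lt_or_ge i Q.length with hi | hi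
      · exact (hpos i hi0 hi).le
      · rw [List.take_of_length_le hi, hQ]
    refine ⟨isDyck_iff.mpr ⟨habove, hQ⟩, hne, ?_⟩
    exact (returns_eq_one_iff habove hQ hne).mpr fun i hi0 hi => (hpos i hi0 hi).ne'

lemma height_take_replicate_true_append (n k : ℕ) (Y : List Bool) :
    height ((List.replicate n true ++ Y).take k) = min k n + height (Y.take (k - n)) := by
  rw [List.take_append, height_append, List.take_replicate, height_replicate_true,
    List.length_replicate]

namespace IsPrimeDyck

variable {P : List Bool}

lemma ne_nil (hP : IsPrimeDyck P) : P ≠ [] := hP.2.1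

lemma height_eq_zero (hP : IsPrimeDyck P) : height P = 0 := (isPrimeDyck_iff.mp hP).2.1

lemma height_take_pos (hP : IsPrimeDyck P) {i : ℕ} (hi0 : 0 < i) (hi : i < P.length) :
    0 < height (P.take i) :=
  (isPrimeDyck_iff.mp hP).2.2 i hi0 hi

lemma staysAbove (hP : IsPrimeDyck P) : StaysAbove P := (isDyck_iff.mp hP.1).1

lemma length_le_of_append_eq (hP : IsPrimeDyck P) {P' X X' : List Bool} (hP' : IsPrimeDyck P')
    (h : P ++ X = P' ++ X') : P'.length ≤ P.length := by
  by_contra! hlt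
  have hprefix : P'.take P.length = P := by
    simpa [List.take_append_of_le_length hlt.le] using (congrArg (List.take P.length) h).symm
  have := hP'.height_take_pos (List.length_pos_iff.mpr hP.ne_nil) hlt
  rw [hprefix, hP.height_eq_zero] at this
  exact this.false

lemma append_inj (hP : IsPrimeDyck P) {P' X X' : List Bool} (hP' : IsPrimeDyck P')
    (h : P ++ X = P' ++ X') : P = P' ∧ X = X' :=
  List.append_inj h <|
    le_antisymm (hP'.length_le_of_append_eq hP h.symm) (hP.length_le_of_append_eq hP' h)

lemma le_of_replicate_append_eq (hP : IsPrimeDyck P) {n n' : ℕ} {X Y : List Bool}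
    (hY : StaysAbove Y) (h : List.replicate n true ++ (P ++ X) = List.replicate n' true ++ Y) :
    n' ≤ n := by
  by_contra! hlt
  have hlen : 0 < P.length := List.length_pos_iff.mpr hP.ne_nil
  have h' := congrArg (fun S => height (S.take (n + P.length))) h
  simp only [height_take_replicate_true_append, Nat.add_sub_cancel_left, List.take_left',
    hP.height_eq_zero] at h'
  have := hY (n + P.length - n')
  omega

end IsPrimeDyck

@[simp] lemma primeBlocks_nil : primeBlocks [] = [] := rfl

@[simp] lemma primeBlocks_cons (p : ℕ × List Bool) (l : List (ℕ × List Bool)) :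
    primeBlocks (p :: l) = List.replicate p.1 true ++ (p.2 ++ primeBlocks l) := by
  simp [primeBlocks]

section PrimeBlocks

variable {l l' : List (ℕ × List Bool)}

lemma primeBlocks_eq_nil_iff (hl : ∀ p ∈ l, IsPrimeDyck p.2) :
    primeBlocks l = [] ↔ l = [] := by
  cases l with
  | nil => simp
  | cons p r =>
    refine iff_of_false (fun h => (hl p List.mem_cons_self).ne_nil ?_) (List.cons_ne_nil _ _)
    simp only [primeBlocks_cons, List.append_eq_nil_iff] at h
    exact h.2.1

lemma staysAbove_primeBlocks (hl : ∀ p ∈ l, IsPrimeDyck p.2) : StaysAbove (primeBlocks l) := by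
  induction l with
  | nil => intro i; simp
  | cons p r ih =>
    simp only [List.forall_mem_cons] at hl
    rw [primeBlocks_cons]
    exact (staysAbove_replicate_true _).append (hl.1.staysAbove.append (ih hl.2))

theorem eq_of_primeBlocks_eq (hl : ∀ p ∈ l, IsPrimeDyck p.2)
    (hl' : ∀ p ∈ l', IsPrimeDyck p.2) (h : primeBlocks l = primeBlocks l') : l = l' := by
  induction l generalizing l' with
  | nil => exact ((primeBlocks_eq_nil_iff hl').mp h.symm).symm
  | cons p r ih =>
    cases l' with
    | nil => exact (primeBlocks_eq_nil_iff hl).mp h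
    | cons p' r' =>
      simp only [List.forall_mem_cons] at hl hl'
      rw [primeBlocks_cons, primeBlocks_cons] at h
      have hn : p.1 = p'.1 := le_antisymm
        (hl'.1.le_of_replicate_append_eq (hl.1.staysAbove.append (staysAbove_primeBlocks hl.2))
          h.symm)
        (hl.1.le_of_replicate_append_eq (hl'.1.staysAbove.append (staysAbove_primeBlocks hl'.2)) h)
      rw [hn, List.append_cancel_left_eq] at h
      obtain ⟨hP, hX⟩ := hl.1.append_inj hl'.1 h
      rw [ih hl.2 hl'.2 hX, Prod.ext hn hP]

lemma one_le_headI_fst (hl : ∀ p ∈ l, IsPrimeDyck p.2) (hne : l ≠ [])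
    (hpos : ∀ k, 0 < k → k ≤ (primeBlocks l).length → 0 < height ((primeBlocks l).take k)) :
    1 ≤ l.headI.1 := by
  obtain ⟨⟨n, P⟩, r, rfl⟩ := List.exists_cons_of_ne_nil hne
  rw [List.headI_cons, Nat.one_le_iff_ne_zero]
  rintro rfl
  have hP : IsPrimeDyck P := hl _ List.mem_cons_self
  have := hpos P.length (List.length_pos_iff.mpr hP.ne_nil) (by simp)
  simp [hP.height_eq_zero] at this

end PrimeBlocks

lemma StaysAbove.exists_prime_append {S : List Bool} (hS : StaysAbove S)
    (hret : ∃ k, 0 < k ∧ k ≤ S.length ∧ height (S.take k) = 0) :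
    ∃ P X, S = P ++ X ∧ IsPrimeDyck P ∧ StaysAbove X := by
  classical
  obtain ⟨hk0, hkS, hk⟩ := Nat.find_spec hret
  refine ⟨S.take (Nat.find hret), S.drop (Nat.find hret), (List.take_append_drop _ S).symm,
    isPrimeDyck_iff.mpr ⟨?_, hk, fun i hi0 hi => ?_⟩, fun i => ?_⟩
  · rw [← List.length_pos_iff, List.length_take]
    omega
  · rw [List.length_take] at hi
    rw [List.take_take, min_eq_left (by omega)]
    exact lt_of_le_of_ne (hS i) fun h0 => Nat.find_min hret (by omega) ⟨hi0, by omega, h0.symm⟩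
  · simpa [List.take_add, hk] using hS (Nat.find hret + i)

lemma staysAbove_of_height_take_pos {S : List Bool}
    (hpos : ∀ k, 0 < k → k ≤ S.length → 0 < height (S.take k)) : StaysAbove S := by
  intro i
  rcases Nat.eq_zero_or_pos (min i S.length) with h | h
  · rcases Nat.min_eq_zero_iff.mp h with rfl | hS
    · simp
    · simp [List.eq_nil_of_length_eq_zero hS]
  · rw [List.take_eq_take_min]
    exact (hpos _ h (min_le_right _ _)).le

lemma exists_eq_true_cons {S : List Bool} (hne : S ≠ [])
    (hpos : ∀ k, 0 < k → k ≤ S.length → 0 < height (S.take k)) :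
    ∃ S', S = true :: S' ∧ StaysAbove S' := by
  obtain ⟨b, S', rfl⟩ := List.exists_cons_of_ne_nil hne
  have hb : b = true := by
    have := hpos 1 (by omega) (by simp)
    cases b <;> simp_all
  subst hb
  refine ⟨S', rfl, fun i => ?_⟩
  have := hpos (min i S'.length + 1) (by omega) (by simp)
  rw [List.take_succ_cons, height_cons, ← List.take_eq_take_min] at this
  simp only [if_true] at this
  omega

theorem exists_primeBlocks_eq (S : List Bool) (hS : StaysAbove S)
    (hlast : S.getLast? ≠ some true) :
    ∃ l : List (ℕ × List Bool), primeBlocks l = S ∧ ∀ p ∈ l, IsPrimeDyck p.2 := by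
  induction hN : S.length using Nat.strong_induction_on generalizing S with
  | _ N ih =>
    by_cases hret : ∃ k, 0 < k ∧ k ≤ S.length ∧ height (S.take k) = 0
    · obtain ⟨P, X, rfl, hP, hX⟩ := hS.exists_prime_append hret
      have hXlast : X.getLast? ≠ some true := fun h => hlast (by simp [List.getLast?_append, h])
      have hXlen : X.length < N := by
        have := List.length_pos_iff.mpr hP.ne_nil
        simp only [List.length_append] at hN
        omega
      obtain ⟨l, hl, hlp⟩ := ih _ hXlen X hX hXlast rfl
      exact ⟨(0, P) :: l, by simp [hl], by simpa [hP] using hlp⟩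
    · rcases eq_or_ne S [] with rfl | hne
      · exact ⟨[], rfl, by simp⟩
      simp only [not_exists, not_and] at hret
      obtain ⟨S', rfl, hS'⟩ :=
        exists_eq_true_cons hne fun k hk0 hk => lt_of_le_of_ne (hS k) (Ne.symm (hret k hk0 hk))
      have hS'ne : S' ≠ [] := by
        rintro rfl
        simp at hlast
      have hS'last : S'.getLast? ≠ some true := by
        rintro h
        simp [List.getLast?_cons, h] at hlast
      obtain ⟨l, hl, hlp⟩ := ih S'.length (by simp at hN; omega) S' hS' hS'last rfl
      obtain ⟨⟨n, P⟩, r, rfl⟩ :=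
        List.exists_cons_of_ne_nil (l := l) (by rintro rfl; exact hS'ne hl.symm)
      exact ⟨(n + 1, P) :: r, by simp [← hl, List.replicate_succ], by simpa using hlp⟩

theorem stmt5_general (Q : List Bool)
    (hstrict : ∀ k, 1 ≤ k → k ≤ Q.length →
      (Q.take k).count false < (Q.take k).count true)
    (hlast : Q.getLast? = some false) :
    ∃! l : List (ℕ × List Bool),
      Q = primeBlocks l ∧ l ≠ [] ∧ (∀ p ∈ l, IsPrimeDyck p.2) ∧
      1 ≤ (l.headI).1 := by
  have hpos : ∀ k, 0 < k → k ≤ Q.length → 0 < height (Q.take k) := fun k hk0 hk => by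
    have := hstrict k hk0 hk
    simp only [height]
    omega
  obtain ⟨l, hl, hlp⟩ :=
    exists_primeBlocks_eq Q (staysAbove_of_height_take_pos hpos) (by simp [hlast])
  have hlne : l ≠ [] := by
    rintro rfl
    simp [← hl] at hlast
  refine ⟨l, ⟨hl.symm, hlne, hlp, one_le_headI_fst hlp hlne (hl ▸ hpos)⟩, ?_⟩
  rintro l' ⟨hl', -, hl'p, -⟩
  exact eq_of_primeBlocks_eq hl'p hlp (hl'.symm.trans hl.symm)

/-- Every nonempty path staying strictly above the diagonal after its start
(and ending with an east step, as the middle factor `Q` of the decomposition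
does) has a unique prime decomposition `n₀ Q₁ n₁ ⋯ nₖ₋₁ Qₖ` with each `Qᵢ`
prime, the `nᵢ` runs of north steps, and `n₀` nonempty. -/
theorem stmt5 (Q : List Bool) (hne : Q ≠ [])
    (hstrict : ∀ k, 1 ≤ k → k ≤ Q.length →
      (Q.take k).count false < (Q.take k).count true)
    (hlast : Q.getLast? = some false) :
    ∃! l : List (ℕ × List Bool),
      Q = primeBlocks l ∧ l ≠ [] ∧ (∀ p ∈ l, IsPrimeDyck p.2) ∧
      1 ≤ (l.headI).1 :=
  stmt5_general Q hstrict hlast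
end

section
/- Every Dyck path D of semilength n that does not end with a single east step and has at least two returns decomposes uniquely as P Q e m R where R is the maximal suffix of single rises beginning with a rise, Q e m R is a Dyck path with precisely two returns, e is a maximal run of east steps, and m is a maximal run of north steps. -/
/-!
The suffix `Q e m R` is forced: any two Dyck suffixes of `D` with the same number of returns
coincide, and the one with two returns is the product `A B` of the last two prime components.
As `D` does not end with a single east step, `B ≠ NE`, so `B` starts with a double rise and `A B`
has a last double rise, at some position `J ≥ |A|`. A suffix of single rises cannot contain it, so
the longest admissible `R` is the part of `A B` after `J`; the part up to `J` ends with a north step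
and contains the east steps of `A`, hence splits uniquely as `Q e m` with maximal runs `e`, `m`.
-/

theorem isDyck_iff_s10 {D : List Bool} : isDyck D = true ↔
    (∀ k, (D.take k).count false ≤ (D.take k).count true) ∧
      D.count true = D.count false := by
  simp only [isDyck, Bool.and_eq_true, List.all_eq_true, List.mem_range, beq_iff_eq,
    decide_eq_true_eq, Nat.lt_succ_iff]
  refine ⟨fun ⟨hpre, hbal⟩ => ⟨fun k => ?_, hbal⟩, fun ⟨hpre, hbal⟩ => ⟨fun k _ => hpre k, hbal⟩⟩
  rcases le_or_gt k D.length with hk | hk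
  · exact hpre k hk
  · rw [List.take_of_length_le hk.le]
    omega

theorem isDyck_of_mem_dyckPaths {n : ℕ} {D : List Bool} (h : D ∈ dyckPaths n) :
    isDyck D = true := by
  simp only [dyckPaths, List.mem_toFinset, List.mem_filter] at h
  exact h.2

theorem isDyck_append_left {A B : List Bool} (h : isDyck (A ++ B) = true)
    (hA : A.count true = A.count false) : isDyck A = true := by
  refine isDyck_iff_s10.2 ⟨fun k => ?_, hA⟩
  rcases le_or_gt k A.length with hk | hk
  · simpa [List.take_append_of_le_length hk] using (isDyck_iff_s10.1 h).1 k
  · simp [List.take_of_length_le hk.le, hA]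

theorem isDyck_append_right {A B : List Bool} (h : isDyck (A ++ B) = true)
    (hA : A.count true = A.count false) : isDyck B = true := by
  obtain ⟨hpre, hbal⟩ := isDyck_iff_s10.1 h
  refine isDyck_iff_s10.2 ⟨fun k => ?_, ?_⟩
  · have := hpre (A.length + k)
    rw [List.take_append, List.take_of_length_le (by omega), Nat.add_sub_cancel_left] at this
    simp only [List.count_append] at this
    omega
  · simp only [List.count_append] at hbal
    omega

theorem exists_eq_append_false_of_isDyck {M : List Bool} (h : isDyck M = true) (hne : M ≠ []) :
    ∃ M', M = M' ++ [false] := by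
  obtain ⟨M', c, rfl⟩ := (List.eq_nil_or_concat' M).resolve_left hne
  obtain ⟨hpre, hbal⟩ := isDyck_iff_s10.1 h
  cases c
  · exact ⟨M', rfl⟩
  · have := hpre M'.length
    simp only [List.take_append_of_le_length le_rfl, List.take_length] at this
    rw [List.count_append, List.count_append, show [true].count true = 1 from rfl,
      show [true].count false = 0 from rfl] at hbal
    omega

def IsReturnAt (D : List Bool) (i : ℕ) : Prop :=
  D[i]? = some false ∧ (D.take (i + 1)).count true = (D.take (i + 1)).count false

instance (D : List Bool) : DecidablePred (IsReturnAt D) :=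
  fun _ => instDecidableAnd

theorem returns_eq_length_filter (D : List Bool) :
    returns D = ((List.range D.length).filter fun i => decide (IsReturnAt D i)).length := by
  unfold returns
  congr 2
  funext i
  rw [Bool.eq_iff_iff, decide_eq_true_iff]
  simp [IsReturnAt]

theorem exists_isReturnAt {M : List Bool} (h : isDyck M = true) (hne : M ≠ []) :
    ∃ i, IsReturnAt M i := by
  obtain ⟨M', rfl⟩ := exists_eq_append_false_of_isDyck h hne
  refine ⟨M'.length, by simp, ?_⟩
  rw [List.take_of_length_le (by simp)]
  exact (isDyck_iff_s10.1 h).2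

theorem eq_nil_of_returns_eq_zero {M : List Bool} (h : isDyck M = true) (h0 : returns M = 0) :
    M = [] := by
  by_contra hne
  obtain ⟨i, hi⟩ := exists_isReturnAt h hne
  have hlt : i < M.length := by
    by_contra hge
    simp [IsReturnAt, List.getElem?_eq_none (not_lt.1 hge)] at hi
  rw [returns_eq_length_filter, List.length_eq_zero_iff, List.filter_eq_nil_iff] at h0
  exact h0 i (List.mem_range.2 hlt) (decide_eq_true hi)

theorem returns_append {A B : List Bool} (hA : A.count true = A.count false) :
    returns (A ++ B) = returns A + returns B := by
  simp only [returns_eq_length_filter, List.length_append, List.range_add, List.filter_append,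
    List.filter_map, List.length_map]
  congr 2
  · refine List.filter_congr fun i hi => ?_
    rw [List.mem_range] at hi
    simp only [IsReturnAt, List.getElem?_append_left hi,
      List.take_append_of_le_length (show i + 1 ≤ A.length by omega)]
  · refine List.filter_congr fun j _ => ?_
    have htake : (A ++ B).take (A.length + j + 1) = A ++ B.take (j + 1) := by
      rw [List.take_append, List.take_of_length_le (by omega)]
      congr 2
      omega
    simp only [Function.comp, IsReturnAt, htake, List.count_append, hA,
      List.getElem?_append_right (Nat.le_add_right _ _), Nat.add_sub_cancel_left,
      Nat.add_left_cancel_iff]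

theorem isReturnAt_take_iff {M : List Bool} {k j : ℕ} (hj : j < k) :
    IsReturnAt (M.take k) j ↔ IsReturnAt M j := by
  simp [IsReturnAt, hj, List.take_take]

theorem returns_take_succ_eq_one {M : List Bool} {i : ℕ} (hi : IsReturnAt M i)
    (hmin : ∀ j < i, ¬IsReturnAt M j) : returns (M.take (i + 1)) = 1 := by
  have hlt : i < M.length := by
    by_contra hge
    simp [IsReturnAt, List.getElem?_eq_none (not_lt.1 hge)] at hi
  have hfirst : (List.range i).filter (fun j => decide (IsReturnAt (M.take (i + 1)) j)) = [] :=
    List.filter_eq_nil_iff.2 fun j hj => by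
      rw [List.mem_range] at hj
      simpa [isReturnAt_take_iff (Nat.lt_succ_of_lt hj)] using hmin j hj
  rw [returns_eq_length_filter, List.length_take_of_le hlt, List.range_succ, List.filter_append,
    hfirst, List.filter_singleton]
  simp [(isReturnAt_take_iff i.lt_succ_self).2 hi]

theorem exists_prime_append {M : List Bool} (h : isDyck M = true) (hne : M ≠ []) :
    ∃ A B, M = A ++ B ∧ IsPrimeDyck A ∧ isDyck B = true := by
  classical
  have hex := exists_isReturnAt h hne
  have hbal : (M.take (Nat.find hex + 1)).count true = (M.take (Nat.find hex + 1)).count false :=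
    (Nat.find_spec hex).2
  have hsplit := (List.take_append_drop (Nat.find hex + 1) M).symm
  refine ⟨_, _, hsplit, ⟨isDyck_append_left (hsplit ▸ h) hbal, ?_, ?_⟩,
    isDyck_append_right (hsplit ▸ h) hbal⟩
  · simp [List.take_eq_nil_iff, hne]
  · exact returns_take_succ_eq_one (Nat.find_spec hex) fun j hj => Nat.find_min hex hj

theorem exists_prime_append_prime {S : List Bool} (h : isDyck S = true) (hr : returns S = 2) :
    ∃ A B, S = A ++ B ∧ IsPrimeDyck A ∧ IsPrimeDyck B := by
  have hne : S ≠ [] := by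
    rintro rfl
    simp [returns_eq_length_filter] at hr
  obtain ⟨A, B, rfl, hA, hB⟩ := exists_prime_append h hne
  have hrB : returns B = 1 := by
    rw [returns_append (isDyck_iff_s10.1 hA.1).2, hA.2.2] at hr
    omega
  refine ⟨A, B, rfl, hA, hB, ?_, hrB⟩
  rintro rfl
  simp [returns_eq_length_filter] at hrB

theorem exists_isDyck_suffix_returns_eq {M : List Bool} (h : isDyck M = true) {k : ℕ}
    (hk : k ≤ returns M) : ∃ P S, M = P ++ S ∧ isDyck S = true ∧ returns S = k := by
  obtain ⟨d, hd⟩ := Nat.exists_eq_add_of_le hk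
  induction d generalizing M with
  | zero => exact ⟨[], M, rfl, h, hd⟩
  | succ d ih =>
    have hne : M ≠ [] := by
      rintro rfl
      simp [returns_eq_length_filter] at hd
    obtain ⟨A, B, rfl, hA, hB⟩ := exists_prime_append h hne
    rw [returns_append (isDyck_iff_s10.1 hA.1).2, hA.2.2] at hd
    obtain ⟨P, S, rfl, hS, hrS⟩ := ih hB (by omega) (by omega)
    exact ⟨A ++ P, S, (List.append_assoc _ _ _).symm, hS, hrS⟩

theorem isDyck_suffix_eq_of_returns_eq {P₁ P₂ S₁ S₂ : List Bool} (he : P₁ ++ S₁ = P₂ ++ S₂)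
    (h₁ : isDyck S₁ = true) (h₂ : isDyck S₂ = true) (hr : returns S₁ = returns S₂) :
    S₁ = S₂ := by
  wlog hle : S₁.length ≤ S₂.length generalizing P₁ P₂ S₁ S₂
  · exact (this he.symm h₂ h₁ hr.symm (by omega)).symm
  obtain ⟨C, rfl⟩ : ∃ C, S₂ = C ++ S₁ := by
    rcases List.append_eq_append_iff.1 he with ⟨C, -, rfl⟩ | ⟨C, -, rfl⟩
    · simp only [List.length_append] at hle
      rw [List.eq_nil_of_length_eq_zero (by omega : C.length = 0)]
      exact ⟨[], rfl⟩
    · exact ⟨C, rfl⟩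
  have hbal : C.count true = C.count false := by
    have h₁' := (isDyck_iff_s10.1 h₁).2
    have h₂' := (isDyck_iff_s10.1 h₂).2
    simp only [List.count_append] at h₂'
    omega
  rw [returns_append hbal] at hr
  rw [eq_nil_of_returns_eq_zero (isDyck_append_left h₂ hbal) (by omega), List.nil_append]

theorem IsPrimeDyck.false_mem {A : List Bool} (hA : IsPrimeDyck A) : false ∈ A := by
  have hbal := (isDyck_iff_s10.1 hA.1).2
  have hlen := List.count_true_add_count_false A
  have hpos := List.length_pos_iff.2 hA.2.1
  exact List.count_pos_iff.1 (by omega)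

theorem IsPrimeDyck.eq_or_exists_eq_cons_cons {B : List Bool} (hB : IsPrimeDyck B) :
    B = [true, false] ∨ ∃ B', B = true :: true :: B' := by
  obtain ⟨hdyck, hne, hret⟩ := hB
  obtain ⟨c, B₁, rfl⟩ := List.exists_cons_of_ne_nil hne
  cases c
  · simpa using (isDyck_iff_s10.1 hdyck).1 1
  match B₁, hdyck, hret with
  | [], hdyck, _ => exact absurd hdyck (by decide)
  | true :: B', _, _ => exact Or.inr ⟨B', rfl⟩
  | false :: B', hdyck, hret =>
    have hbal : [true, false].count true = [true, false].count false := rfl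
    rw [show true :: false :: B' = [true, false] ++ B' from rfl] at hdyck hret
    rw [returns_append hbal, show returns [true, false] = 1 from rfl] at hret
    rw [eq_nil_of_returns_eq_zero (isDyck_append_right hdyck hbal) (by omega)]
    exact Or.inl rfl

theorem exists_eq_append_replicate {α : Type*} [DecidableEq α] (l : List α) (a : α) :
    ∃ l' k, l = l' ++ List.replicate k a ∧ l'.getLast? ≠ some a := by
  induction l using List.reverseRecOn with
  | nil => exact ⟨[], 0, rfl, by simp⟩
  | append_singleton l b ih =>
    by_cases hb : b = a
    · obtain ⟨l', k, rfl, hl'⟩ := ih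
      exact ⟨l', k + 1, by simp [hb, List.replicate_succ'], hl'⟩
    · exact ⟨l ++ [b], 0, by simp, by simpa using hb⟩

theorem eq_of_append_replicate_eq {α : Type*} {a : α} {l₁ l₂ : List α} {k₁ k₂ : ℕ}
    (h : l₁ ++ List.replicate k₁ a = l₂ ++ List.replicate k₂ a)
    (h₁ : l₁.getLast? ≠ some a) (h₂ : l₂.getLast? ≠ some a) : l₁ = l₂ ∧ k₁ = k₂ := by
  induction k₁ generalizing k₂ with
  | zero =>
    cases k₂ with
    | zero => simpa using h
    | succ k₂ =>
      rw [List.replicate_zero, List.append_nil] at h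
      simp [h, List.replicate_succ'] at h₁
  | succ k₁ ih =>
    cases k₂ with
    | zero =>
      rw [List.replicate_zero, List.append_nil] at h
      simp [← h, List.replicate_succ'] at h₂
    | succ k₂ =>
      simp only [List.replicate_succ', ← List.append_assoc, List.append_cancel_right_eq] at h
      exact (ih h).imp_right (congrArg (· + 1))

theorem exists_eq_append_replicate_false_replicate_true {T : List Bool}
    (hT : T.getLast? = some true) (hf : false ∈ T) :
    ∃ Q e m, T = Q ++ List.replicate e false ++ List.replicate m true ∧ 1 ≤ e ∧ 1 ≤ m ∧
      Q.getLast? ≠ some false := by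
  obtain ⟨T₁, m, rfl, hT₁⟩ := exists_eq_append_replicate T true
  obtain ⟨Q, e, rfl, hQ⟩ := exists_eq_append_replicate T₁ false
  refine ⟨Q, e, m, rfl, Nat.one_le_iff_ne_zero.2 ?_, Nat.one_le_iff_ne_zero.2 ?_, hQ⟩
  · rintro rfl
    obtain rfl : Q = [] := by
      cases hlast : Q.getLast? with
      | none => exact List.getLast?_eq_none_iff.1 hlast
      | some c => cases c <;> simp_all
    simp at hf
  · rintro rfl
    exact hT₁ (by simpa using hT)

theorem eq_of_append_replicate_false_replicate_true_eq {Q Q' : List Bool} {e e' m m' : ℕ}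
    (h : Q ++ List.replicate e false ++ List.replicate m true =
      Q' ++ List.replicate e' false ++ List.replicate m' true)
    (he : 1 ≤ e) (he' : 1 ≤ e') (hQ : Q.getLast? ≠ some false) (hQ' : Q'.getLast? ≠ some false) :
    Q = Q' ∧ e = e' ∧ m = m' := by
  have hlast {Q : List Bool} {e : ℕ} (he : 1 ≤ e) :
      (Q ++ List.replicate e false).getLast? ≠ some true := by
    simp [List.getLast?_append, List.getLast?_replicate, Nat.one_le_iff_ne_zero.1 he]
  obtain ⟨hQe, rfl⟩ := eq_of_append_replicate_eq h (hlast he) (hlast he')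
  obtain ⟨rfl, rfl⟩ := eq_of_append_replicate_eq hQe hQ hQ'
  exact ⟨rfl, rfl, rfl⟩

def DoubleRiseAt (l : List Bool) (i : ℕ) : Prop :=
  l[i]? = some true ∧ l[i + 1]? = some true

theorem DoubleRiseAt.lt_length {l : List Bool} {i : ℕ} (h : DoubleRiseAt l i) : i < l.length := by
  by_contra hge
  simp [DoubleRiseAt, List.getElem?_eq_none (not_lt.1 hge)] at h

theorem exists_last_doubleRiseAt {S : List Bool} {j : ℕ} (hj : DoubleRiseAt S j) :
    ∃ J, j ≤ J ∧ DoubleRiseAt S J ∧ SingleRises (S.drop (J + 1)) := by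
  classical
  refine ⟨Nat.findGreatest (DoubleRiseAt S) S.length,
    Nat.le_findGreatest hj.lt_length.le hj, Nat.findGreatest_spec hj.lt_length.le hj,
    fun i hi => ?_⟩
  have hi' : DoubleRiseAt S (Nat.findGreatest (DoubleRiseAt S) S.length + 1 + i) := by
    simpa [DoubleRiseAt, List.getElem?_drop, Nat.add_assoc] using hi
  exact Nat.findGreatest_is_greatest (by omega) hi'.lt_length.le hi'

theorem length_le_of_singleRises {S W R : List Bool} {J : ℕ} (hJ : DoubleRiseAt S J)
    (hS : S = W ++ R) (hR : SingleRises R) : R.length ≤ (S.drop (J + 1)).length := by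
  subst hS
  by_contra hlt
  simp only [List.length_drop, List.length_append] at hlt
  refine hR (J - W.length) ?_
  simpa [DoubleRiseAt, List.getElem?_append_right (by omega : W.length ≤ J),
    List.getElem?_append_right (by omega : W.length ≤ J + 1),
    show J + 1 - W.length = J - W.length + 1 by omega] using hJ

theorem exists_runs_of_returns_eq_two {S : List Bool} (hS : isDyck S = true)
    (hr : returns S = 2) (hend : ¬EndsSingleEast S) :
    ∃ Q e m R, S = Q ++ List.replicate e false ++ List.replicate m true ++ R ∧ 1 ≤ e ∧ 1 ≤ m ∧
      Q.getLast? ≠ some false ∧ SingleRises R ∧ R.head? = some true ∧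
      ∀ W R', S = W ++ R' → SingleRises R' → R'.length ≤ R.length := by
  obtain ⟨A, B, rfl, hA, hB⟩ := exists_prime_append_prime hS hr
  obtain ⟨B', rfl⟩ := hB.eq_or_exists_eq_cons_cons.resolve_left fun h => hend ⟨A, h ▸ rfl⟩
  obtain ⟨J, hAJ, hJ, hsr⟩ :=
    exists_last_doubleRiseAt (S := A ++ true :: true :: B') (j := A.length) (by simp [DoubleRiseAt])
  have hlast : ((A ++ true :: true :: B').take (J + 1)).getLast? = some true := by
    simp [List.getLast?_take, hJ.1]
  have hfalse : false ∈ (A ++ true :: true :: B').take (J + 1) := by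
    rw [List.take_append, List.take_of_length_le (by omega)]
    exact List.mem_append_left _ hA.false_mem
  obtain ⟨Q, e, m, hT, he, hm, hQ⟩ :=
    exists_eq_append_replicate_false_replicate_true hlast hfalse
  refine ⟨Q, e, m, _, by rw [← hT, List.take_append_drop], he, hm, hQ, hsr,
    by rw [List.head?_drop]; exact hJ.2, fun W R' hW hR' => length_le_of_singleRises hJ hW hR'⟩

structure IsRunDecomposition (D P Q : List Bool) (e m : ℕ) (R : List Bool) : Prop where
  eq_append : D = P ++ Q ++ List.replicate e false ++ List.replicate m true ++ R
  one_le_e : 1 ≤ e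
  one_le_m : 1 ≤ m
  getLast?_ne : Q.getLast? ≠ some false
  singleRises : SingleRises R
  eq_nil_or_head?_eq : R = [] ∨ R.head? = some true
  isDyck_suffix : isDyck (Q ++ List.replicate e false ++ List.replicate m true ++ R) = true
  returns_suffix : returns (Q ++ List.replicate e false ++ List.replicate m true ++ R) = 2

namespace IsRunDecomposition

variable {D P Q P' Q' R R' : List Bool} {e m e' m' : ℕ}

theorem prefix_append_eq (h : IsRunDecomposition D P Q e m R)
    (h' : IsRunDecomposition D P' Q' e' m' R') :
    P ++ (Q ++ List.replicate e false ++ List.replicate m true ++ R) =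
      P' ++ (Q' ++ List.replicate e' false ++ List.replicate m' true ++ R') := by
  simpa only [List.append_assoc] using h.eq_append.symm.trans h'.eq_append

theorem suffix_eq (h : IsRunDecomposition D P Q e m R)
    (h' : IsRunDecomposition D P' Q' e' m' R') :
    Q ++ List.replicate e false ++ List.replicate m true ++ R =
      Q' ++ List.replicate e' false ++ List.replicate m' true ++ R' :=
  isDyck_suffix_eq_of_returns_eq (h.prefix_append_eq h') h.isDyck_suffix h'.isDyck_suffix
    (h.returns_suffix.trans h'.returns_suffix.symm)

theorem eq_of_length_eq (h : IsRunDecomposition D P Q e m R)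
    (h' : IsRunDecomposition D P' Q' e' m' R') (hlen : R.length = R'.length) :
    (P, Q, e, m, R) = (P', Q', e', m', R') := by
  obtain ⟨hW, rfl⟩ := List.append_inj' (h.suffix_eq h') hlen
  obtain ⟨rfl, rfl, rfl⟩ := eq_of_append_replicate_false_replicate_true_eq hW
    h.one_le_e h'.one_le_e h.getLast?_ne h'.getLast?_ne
  rw [List.append_cancel_right (h.prefix_append_eq h')]

end IsRunDecomposition

theorem exists_isRunDecomposition_forall_length_le {D : List Bool} (hD : isDyck D = true)
    (hend : ¬EndsSingleEast D) (h2 : 2 ≤ returns D) :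
    ∃ P Q e m R, IsRunDecomposition D P Q e m R ∧
      ∀ P' Q' e' m' R', IsRunDecomposition D P' Q' e' m' R' → R'.length ≤ R.length := by
  obtain ⟨P, S, hPS, hS, hrS⟩ := exists_isDyck_suffix_returns_eq hD h2
  obtain ⟨Q, e, m, R, hQR, he, hm, hQ, hR, hRh, hmax⟩ :=
    exists_runs_of_returns_eq_two hS hrS fun ⟨X, hX⟩ => hend ⟨P ++ X, by simp [hPS, hX]⟩
  have hdec : IsRunDecomposition D P Q e m R :=
    ⟨by simp only [hPS, hQR, List.append_assoc], he, hm, hQ, hR, Or.inr hRh, hQR ▸ hS, hQR ▸ hrS⟩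
  refine ⟨P, Q, e, m, R, hdec, fun _ Q' e' m' R' h' =>
    hmax (Q' ++ List.replicate e' false ++ List.replicate m' true) R' ?_ h'.singleRises⟩
  rw [hQR, hdec.suffix_eq h']

/-- Every Dyck path of semilength `n` not ending with a single east step with
at least two returns decomposes uniquely as `P Q e m R` where `R` is the
maximal suffix of single rises beginning with a rise, `Q e m R` is a Dyck path
with precisely two returns, `e` is a maximal run of east steps and `m` a
maximal run of north steps. -/
theorem stmt10 (n : ℕ) (D : List Bool) (hD : D ∈ dyckPaths n)
    (h1 : ¬ EndsSingleEast D) (h2 : 2 ≤ returns D) :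
    ∃! t : List Bool × List Bool × ℕ × ℕ × List Bool,
      D = t.1 ++ t.2.1 ++ List.replicate t.2.2.1 false ++
        List.replicate t.2.2.2.1 true ++ t.2.2.2.2 ∧
      1 ≤ t.2.2.1 ∧ 1 ≤ t.2.2.2.1 ∧
      t.2.1.getLast? ≠ some false ∧
      SingleRises t.2.2.2.2 ∧
      (t.2.2.2.2 = [] ∨ t.2.2.2.2.head? = some true) ∧
      isDyck (t.2.1 ++ List.replicate t.2.2.1 false ++
        List.replicate t.2.2.2.1 true ++ t.2.2.2.2) = true ∧
      returns (t.2.1 ++ List.replicate t.2.2.1 false ++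
        List.replicate t.2.2.2.1 true ++ t.2.2.2.2) = 2 ∧
      (∀ P' Q' : List Bool, ∀ e' m' : ℕ, ∀ R' : List Bool,
        D = P' ++ Q' ++ List.replicate e' false ++
          List.replicate m' true ++ R' →
        1 ≤ e' → 1 ≤ m' → Q'.getLast? ≠ some false → SingleRises R' →
        (R' = [] ∨ R'.head? = some true) →
        isDyck (Q' ++ List.replicate e' false ++
          List.replicate m' true ++ R') = true →
        returns (Q' ++ List.replicate e' false ++
          List.replicate m' true ++ R') = 2 →
        R'.length ≤ t.2.2.2.2.length) := by
  obtain ⟨P, Q, e, m, R, hdec, hmax⟩ :=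
    exists_isRunDecomposition_forall_length_le (isDyck_of_mem_dyckPaths hD) h1 h2
  have ⟨hDeq, he, hm, hQ, hR, hRh, hS, hrS⟩ := hdec
  refine ⟨(P, Q, e, m, R), ⟨hDeq, he, hm, hQ, hR, hRh, hS, hrS,
    fun P' Q' e' m' R' h₁ h₂ h₃ h₄ h₅ h₆ h₇ h₈ =>
      hmax P' Q' e' m' R' ⟨h₁, h₂, h₃, h₄, h₅, h₆, h₇, h₈⟩⟩, ?_⟩
  rintro ⟨P', Q', e', m', R'⟩ ⟨h₁, h₂, h₃, h₄, h₅, h₆, h₇, h₈, hmax'⟩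
  have hdec' : IsRunDecomposition D P' Q' e' m' R' := ⟨h₁, h₂, h₃, h₄, h₅, h₆, h₇, h₈⟩
  refine (hdec.eq_of_length_eq hdec' (le_antisymm ?_ (hmax _ _ _ _ _ hdec'))).symm
  exact hmax' P Q e m R hDeq he hm hQ hR hRh hS hrS
end
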